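/- Let M be a positive integer, h > 0, and let u, v, S be periodic grid functions satisfying the reduction relation v_i = δ_x² u_i − (h²/12)·δ_x² v_i + S_i for all i. Then (Δ_x v, u) = (h²/12)·(Δ_x v, S) + (Δ_x S, u). (Lemma 4, identity (lem4-3).) -/

import Mathlib

open Finset

namespace BBMB

/-- A periodic grid function with period `M`. -/
def Periodic (M : ℕ) (u : ℤ → ℝ) : Prop := ∀ i : ℤ, u (i + (M : ℤ)) = u i

/-- Forward difference `δ_x u_{i+1/2} = (u_{i+1} - u_i)/h`. -/
noncomputable def dxp (h : ℝ) (u : ℤ → ℝ) (i : ℤ) : ℝ := (u (i + 1) - u i) / h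

/-- Backward difference `δ_x u_{i-1/2} = (u_i - u_{i-1})/h`. -/
noncomputable def dxm (h : ℝ) (u : ℤ → ℝ) (i : ℤ) : ℝ := (u i - u (i - 1)) / h

/-- Second difference `δ_x² u_i = (u_{i+1} - 2 u_i + u_{i-1})/h²`. -/
noncomputable def dxx (h : ℝ) (u : ℤ → ℝ) (i : ℤ) : ℝ :=
  (u (i + 1) - 2 * u i + u (i - 1)) / h ^ 2

/-- Centered difference `Δ_x u_i = (u_{i+1} - u_{i-1})/(2h)`. -/
noncomputable def Dx (h : ℝ) (u : ℤ → ℝ) (i : ℤ) : ℝ := (u (i + 1) - u (i - 1)) / (2 * h)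

/-- Discrete inner product `(u, w) = h ∑_{i=1}^{M} u_i w_i`. -/
noncomputable def ip (M : ℕ) (h : ℝ) (u w : ℤ → ℝ) : ℝ :=
  h * ∑ i ∈ Finset.Icc (1 : ℤ) (M : ℤ), u i * w i

/-- Discrete inner product `⟨δ_x u, δ_x w⟩ = h ∑_{i=1}^{M} (δ_x u_{i-1/2})(δ_x w_{i-1/2})`. -/
noncomputable def dip (M : ℕ) (h : ℝ) (u w : ℤ → ℝ) : ℝ :=
  h * ∑ i ∈ Finset.Icc (1 : ℤ) (M : ℤ), dxm h u i * dxm h w i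

/-- Discrete `L²` norm `‖u‖ = √((u,u))`. -/
noncomputable def nrm (M : ℕ) (h : ℝ) (u : ℤ → ℝ) : ℝ := Real.sqrt (ip M h u u)

/-- Discrete `H¹` seminorm `|u|₁ = √(⟨δ_x u, δ_x u⟩)`. -/
noncomputable def snorm (M : ℕ) (h : ℝ) (u : ℤ → ℝ) : ℝ := Real.sqrt (dip M h u u)

/-- Trilinear term `ψ(u,v)_i = (1/3) (u_i Δ_x v_i + Δ_x (u·v)_i)`. -/
noncomputable def psi (h : ℝ) (u v : ℤ → ℝ) (i : ℤ) : ℝ :=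
  (1 / 3) * (u i * Dx h v i + Dx h (fun j => u j * v j) i)

/-!
Summation by parts over a period makes `Dx` skew-adjoint and `dxx` self-adjoint for `ip`, and
the two operators commute. Hence `(Dx w, w) = 0`, `(Dx w, dxx w) = 0`, and
`(Dx (dxx f), g) = (Dx f, dxx g)`. Applying `Dx` to the reduction relation and pairing with `u`,
the term `(Dx (dxx u), u)` vanishes and `(Dx (dxx v), u) = (Dx v, dxx u)`; substituting `dxx u`
from the relation once more, only `-(Dx v, S)` survives.
-/

theorem sum_Icc_one_sub {G : Type*} [AddCommGroup G] (F : ℤ → G) (n : ℕ) :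
    ∑ i ∈ Icc (1 : ℤ) n, (F (i + 1) - F i) = F (n + 1) - F 1 := by
  induction n with
  | zero => simp
  | succ n ih =>
    rw [Nat.cast_succ, ← insert_Icc_right_eq_Icc_add_one (by omega), sum_insert (by simp), ih]
    abel

section

variable {M : ℕ} {h : ℝ} {f g : ℤ → ℝ}

theorem Periodic.sum_Icc_comp_add_one {F : ℤ → ℝ} (hF : Periodic M F) :
    ∑ i ∈ Icc (1 : ℤ) M, F (i + 1) = ∑ i ∈ Icc (1 : ℤ) M, F i := by
  rw [← sub_eq_zero, ← sum_sub_distrib, sum_Icc_one_sub, add_comm, hF 1, sub_self]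

-- `Periodic M` unfolds to Mathlib's `Function.Periodic _ M`, whose closure lemmas apply.
theorem Periodic.sum_Icc_mul_comp_add_one (hf : Periodic M f) (hg : Periodic M g) :
    ∑ i ∈ Icc (1 : ℤ) M, f (i + 1) * g i = ∑ i ∈ Icc (1 : ℤ) M, f i * g (i - 1) := by
  simpa using
    Periodic.sum_Icc_comp_add_one (Function.Periodic.mul hf (Function.Periodic.sub_const hg 1))

theorem periodic_Dx (hf : Periodic M f) : Periodic M (Dx h f) := fun i => by
  rw [Dx, Dx, add_right_comm, add_sub_right_comm, hf, hf]

theorem periodic_dxx (hf : Periodic M f) : Periodic M (dxx h f) := fun i => by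
  rw [dxx, dxx, add_right_comm, add_sub_right_comm, hf, hf, hf]

theorem Dx_dxx (h : ℝ) (f : ℤ → ℝ) : Dx h (dxx h f) = dxx h (Dx h f) := by
  funext i
  simp only [Dx, dxx]
  ring_nf

variable (M h) in
theorem ip_comm (f g : ℤ → ℝ) : ip M h f g = ip M h g f := by
  simp only [ip, mul_comm (f _)]

theorem ip_add_left (f g w : ℤ → ℝ) : ip M h (f + g) w = ip M h f w + ip M h g w := by
  simp only [ip, Pi.add_apply, add_mul, sum_add_distrib, mul_add]

theorem ip_sub_left (f g w : ℤ → ℝ) : ip M h (f - g) w = ip M h f w - ip M h g w := by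
  simp only [ip, Pi.sub_apply, sub_mul, sum_sub_distrib, mul_sub]

theorem ip_smul_left (c : ℝ) (f w : ℤ → ℝ) : ip M h (c • f) w = c * ip M h f w := by
  simp only [ip, Pi.smul_apply, smul_eq_mul, mul_assoc, ← mul_sum, mul_left_comm h]

theorem ip_add_right (f g w : ℤ → ℝ) : ip M h w (f + g) = ip M h w f + ip M h w g := by
  rw [ip_comm, ip_add_left, ip_comm, ip_comm M h g]

theorem ip_sub_right (f g w : ℤ → ℝ) : ip M h w (f - g) = ip M h w f - ip M h w g := by
  rw [ip_comm, ip_sub_left, ip_comm, ip_comm M h g]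

theorem ip_smul_right (c : ℝ) (f w : ℤ → ℝ) : ip M h w (c • f) = c * ip M h w f := by
  rw [ip_comm, ip_smul_left, ip_comm]

theorem ip_Dx_left (hf : Periodic M f) (hg : Periodic M g) :
    ip M h (Dx h f) g = -ip M h f (Dx h g) := by
  have shift_fg := hf.sum_Icc_mul_comp_add_one hg
  have shift_gf := hg.sum_Icc_mul_comp_add_one hf
  simp only [mul_comm (g _)] at shift_gf
  simp only [ip, Dx, div_mul_eq_mul_div, mul_div_assoc', ← sum_div, sub_mul, mul_sub,
    sum_sub_distrib, shift_fg, shift_gf]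
  ring

theorem ip_dxx_left (hf : Periodic M f) (hg : Periodic M g) :
    ip M h (dxx h f) g = ip M h f (dxx h g) := by
  have shift_fg := hf.sum_Icc_mul_comp_add_one hg
  have shift_gf := hg.sum_Icc_mul_comp_add_one hf
  simp only [mul_comm (g _)] at shift_gf
  simp only [ip, dxx, div_mul_eq_mul_div, mul_div_assoc', ← sum_div, sub_mul, mul_sub, add_mul,
    mul_add, sum_sub_distrib, sum_add_distrib, shift_fg, shift_gf, mul_assoc, mul_left_comm (f _),
    ← mul_sum]
  ring

theorem ip_Dx_self (hf : Periodic M f) : ip M h (Dx h f) f = 0 := by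
  have skew := ip_Dx_left (h := h) hf hf
  rw [ip_comm M h f] at skew
  linarith

theorem ip_Dx_dxx_left (hf : Periodic M f) (hg : Periodic M g) :
    ip M h (Dx h (dxx h f)) g = ip M h (Dx h f) (dxx h g) := by
  rw [Dx_dxx, ip_dxx_left (periodic_Dx hf) hg]

theorem ip_Dx_dxx_self (hf : Periodic M f) : ip M h (Dx h f) (dxx h f) = 0 := by
  have skew := ip_Dx_dxx_left (h := h) hf hf
  rw [ip_Dx_left (periodic_dxx hf) hf, ip_comm M h (dxx h f)] at skew
  linarith

end

theorem reduction_Dx_identity_general (M : ℕ) (h : ℝ) (u v S : ℤ → ℝ)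
    (hu : Periodic M u) (hv : Periodic M v)
    (hrel : ∀ i : ℤ, v i = dxx h u i - h ^ 2 / 12 * dxx h v i + S i) :
    ip M h (Dx h v) u = h ^ 2 / 12 * ip M h (Dx h v) S + ip M h (Dx h S) u := by
  set c := h ^ 2 / 12
  have hDv : Dx h v = Dx h (dxx h u) - c • Dx h (dxx h v) + Dx h S := by
    funext i
    simp only [Dx, Pi.add_apply, Pi.sub_apply, Pi.smul_apply, smul_eq_mul]
    rw [hrel (i + 1), hrel (i - 1)]
    ring
  have hdxxu : dxx h u = v + c • dxx h v - S := by
    funext i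
    simp only [Pi.add_apply, Pi.sub_apply, Pi.smul_apply, smul_eq_mul]
    linarith [hrel i]
  calc ip M h (Dx h v) u
      = ip M h (Dx h (dxx h u)) u - c * ip M h (Dx h (dxx h v)) u + ip M h (Dx h S) u := by
        rw [hDv, ip_add_left, ip_sub_left, ip_smul_left]
    _ = -c * ip M h (Dx h v) (dxx h u) + ip M h (Dx h S) u := by
        rw [ip_Dx_dxx_left hu hu, ip_Dx_dxx_self hu, ip_Dx_dxx_left hv hu]
        ring
    _ = -c * (ip M h (Dx h v) v + c * ip M h (Dx h v) (dxx h v) - ip M h (Dx h v) S)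
          + ip M h (Dx h S) u := by
        rw [hdxxu, ip_sub_right, ip_add_right, ip_smul_right]
    _ = c * ip M h (Dx h v) S + ip M h (Dx h S) u := by
        rw [ip_Dx_self hv, ip_Dx_dxx_self hv]
        ring

/-- Lemma 4, identity (lem4-3). -/
theorem reduction_Dx_identity (M : ℕ) (h : ℝ) (u v S : ℤ → ℝ)
    (hM : 0 < M) (hh : 0 < h)
    (hu : Periodic M u) (hv : Periodic M v) (hS : Periodic M S)
    (hrel : ∀ i : ℤ, v i = dxx h u i - h ^ 2 / 12 * dxx h v i + S i) :
    ip M h (Dx h v) u = h ^ 2 / 12 * ip M h (Dx h v) S + ip M h (Dx h S) u :=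
  reduction_Dx_identity_general M h u v S hu hv hrel

end BBMB
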